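/- Inverse-tolerance lower bound for relative-error certification: Let n ≥ 1, let f⋆ : {0,1}^n → Bool, and let H be a set of functions {0,1}^n → Bool that contains f⋆ and, for every subset I ⊆ Fin n, every pattern π : I → {0,1}, and every σ ∈ Bool, contains the block override g_{π,σ} defined by g_{π,σ}(x) = σ if x_i = π_i for all i ∈ I and g_{π,σ}(x) = f⋆(x) otherwise. Then for every real ε with 2^{−n−1} ≤ ε ≤ 1/8, cert_ε(f⋆, H) ≥ 1/(4ε). -/
import Mathlib


/-- The absolute error `Δ(h)`: the number of points of the domain on which `h`
disagrees with the target `f`. -/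
def errCount {n : ℕ} (f h : (Fin n → Bool) → Bool) : ℕ :=
  (Finset.univ.filter fun x : Fin n → Bool => h x ≠ f x).card

/-- `cert_ε(f, H)`: the minimum cardinality of a set `S ⊆ {0,1}ⁿ` such that every
`h ∈ H` agreeing with `f` on `S` has normalized error `Δ(h)/2ⁿ ≤ ε`. -/
noncomputable def certEps {n : ℕ} (H : Set ((Fin n → Bool) → Bool))
    (f : (Fin n → Bool) → Bool) (ε : ℝ) : ℕ :=
  sInf {k : ℕ | ∃ S : Finset (Fin n → Bool), S.card = k ∧
    ∀ h ∈ H, (∀ x ∈ S, h x = f x) → (errCount f h : ℝ) / 2 ^ n ≤ ε}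

lemma block_card {n : ℕ} (I : Finset (Fin n)) (π : Fin n → Bool) :
    (Finset.univ.filter fun x : Fin n → Bool => ∀ i ∈ I, x i = π i).card
      = 2 ^ (n - I.card) := by
  classical
  rw [← Fintype.card_subtype]
  have e : {x : Fin n → Bool // ∀ i ∈ I, x i = π i} ≃ ({i : Fin n // i ∉ I} → Bool) :=
    { toFun := fun x i => x.1 i.1
      invFun := fun y => ⟨fun i => if h : i ∈ I then π i else y ⟨i, h⟩, by
        intro i hi; simp [hi]⟩
      left_inv := by
        rintro ⟨x, hx⟩
        ext i
        by_cases h : i ∈ I <;> simp [h, hx i]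
      right_inv := by
        intro y; ext i
        simp [i.2] }
  rw [Fintype.card_congr e, Fintype.card_fun]
  have : Fintype.card {i : Fin n // i ∉ I} = n - I.card := by
    simp [Fintype.card_subtype_compl]
  simp [this]

/-- **Inverse-tolerance lower bound for relative-error certification.** Let `n ≥ 1` and
let `H` contain the target `f` together with every block override `g_{π,σ}` (for every
trigger set `I`, pattern `π`, and label `σ`). Then for every real `ε` with
`2^{−n−1} ≤ ε ≤ 1/8`, `cert_ε(f, H) ≥ 1/(4ε)`. -/
theorem stmt17 {n : ℕ} (hn : 1 ≤ n) (f : (Fin n → Bool) → Bool)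
    (H : Set ((Fin n → Bool) → Bool)) (hf : f ∈ H)
    (hov : ∀ (I : Finset (Fin n)) (π : Fin n → Bool) (σ : Bool),
      (fun x => if ∀ i ∈ I, x i = π i then σ else f x) ∈ H)
    (ε : ℝ) (hε₁ : 1 / 2 ^ (n + 1) ≤ ε) (hε₂ : ε ≤ 1 / 8) :
    1 / (4 * ε) ≤ (certEps H f ε : ℝ) := by
  classical
  have hεpos : (0:ℝ) < ε := lt_of_lt_of_le (by positivity) hε₁
  have hne : {k : ℕ | ∃ S : Finset (Fin n → Bool), S.card = k ∧
      ∀ h ∈ H, (∀ x ∈ S, h x = f x) → (errCount f h : ℝ) / 2 ^ n ≤ ε}.Nonempty := by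
    refine ⟨(Finset.univ : Finset (Fin n → Bool)).card, Finset.univ, rfl, ?_⟩
    intro h _ hag
    have h0 : errCount f h = 0 := by
      simp only [errCount, Finset.card_eq_zero, Finset.filter_eq_empty_iff]
      intro x _
      simp [hag x (Finset.mem_univ x)]
    rw [h0]
    simpa using hεpos.le
  obtain ⟨S, hScard, hScert⟩ := Nat.sInf_mem hne
  rw [show certEps H f ε = S.card from hScard.symm]
  clear hScard hne
  by_contra hcon
  push_neg at hcon
  have hscon : (S.card : ℝ) < 1 / (4 * ε) := hcon
  have hk1 : S.card < 2 ^ Nat.size S.card := Nat.lt_size_self S.card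
  have hk2 : (2:ℝ) ^ Nat.size S.card < 1 / (2 * ε) := by
    rcases Nat.eq_zero_or_pos S.card with h0 | hpos
    · rw [h0]
      simp only [Nat.size_zero, pow_zero]
      rw [lt_div_iff₀ (by positivity)]
      nlinarith
    · have hks : 1 ≤ Nat.size S.card := Nat.size_pos.mpr hpos
      have h1 : 2 ^ (Nat.size S.card - 1) ≤ S.card := by
        by_contra hlt
        push_neg at hlt
        have := Nat.size_le.mpr hlt
        omega
      have h2 : (2:ℕ) ^ Nat.size S.card ≤ 2 * S.card := by
        have he : (2:ℕ) ^ Nat.size S.card = 2 * 2 ^ (Nat.size S.card - 1) := by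
          rw [← pow_succ']
          congr 1
          omega
        omega
      have h2' : ((2:ℝ)) ^ Nat.size S.card ≤ 2 * S.card := by exact_mod_cast h2
      rw [lt_div_iff₀ (by positivity)] at hscon ⊢
      nlinarith
  have hk2n : (1:ℝ) / (2 * ε) ≤ 2 ^ n := by
    rw [div_le_iff₀ (by positivity)]
    rw [div_le_iff₀ (by positivity)] at hε₁
    have he : (2:ℝ) ^ (n+1) = 2 ^ n * 2 := by ring
    nlinarith [hε₁]
  have hkn : Nat.size S.card < n := by
    have h : (2:ℝ) ^ Nat.size S.card < 2 ^ n := lt_of_lt_of_le hk2 hk2n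
    exact_mod_cast (pow_lt_pow_iff_right₀ (a := (2:ℝ)) one_lt_two).mp h
  have hm1 : n - Nat.size S.card = (n - Nat.size S.card - 1) + 1 := by omega
  have hm2 : Nat.size S.card + (n - Nat.size S.card - 1 + 1) = n := by omega
  obtain ⟨I, -, hIcard⟩ := Finset.exists_subset_card_eq
    (s := (Finset.univ : Finset (Fin n))) (n := Nat.size S.card) (by simpa using hkn.le)
  have hT : (Finset.univ.filter fun y : Fin n → Bool => ∀ i ∈ Iᶜ, y i = false).card
      = 2 ^ Nat.size S.card := by
    rw [block_card]
    congr 1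
    rw [Finset.card_compl, hIcard]
    simp
    omega
  have hsub : S.image (fun x i => if i ∈ I then x i else false) ⊆
      Finset.univ.filter fun y : Fin n → Bool => ∀ i ∈ Iᶜ, y i = false := by
    intro y hy
    obtain ⟨x, -, rfl⟩ := Finset.mem_image.mp hy
    simp only [Finset.mem_filter, Finset.mem_univ, true_and, Finset.mem_compl]
    intro i hi
    simp [hi]
  have hcardlt : (S.image (fun x i => if i ∈ I then x i else false)).card <
      (Finset.univ.filter fun y : Fin n → Bool => ∀ i ∈ Iᶜ, y i = false).card := by
    rw [hT]
    exact lt_of_le_of_lt Finset.card_image_le hk1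
  have hnsub : ¬ (Finset.univ.filter fun y : Fin n → Bool => ∀ i ∈ Iᶜ, y i = false) ⊆
      S.image (fun x i => if i ∈ I then x i else false) := by
    intro hsub'
    exact absurd (Finset.card_le_card hsub') (not_le.mpr hcardlt)
  obtain ⟨π, hπT, hπim⟩ := Finset.not_subset.mp hnsub
  have hπT' : ∀ i ∉ I, π i = false := by
    intro i hi
    exact (Finset.mem_filter.mp hπT).2 i (Finset.mem_compl.mpr hi)
  have hdisj : ∀ x ∈ S, ¬ (∀ i ∈ I, x i = π i) := by
    intro x hx hag
    apply hπim
    apply Finset.mem_image.mpr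
    refine ⟨x, hx, ?_⟩
    funext i
    by_cases h : i ∈ I
    · simp [h, hag i h]
    · simp [h, hπT' i h]
  clear hsub hcardlt hnsub hπim hπT
  -- split the block according to the value of f
  have hAsum :
      (Finset.univ.filter fun x : Fin n → Bool => (∀ i ∈ I, x i = π i) ∧ f x ≠ true).card +
      (Finset.univ.filter fun x : Fin n → Bool => (∀ i ∈ I, x i = π i) ∧ f x ≠ false).card
        = 2 ^ (n - Nat.size S.card) := by
    rw [← hIcard, ← block_card I π, ← Finset.card_union_of_disjoint]
    · congr 1
      ext x
      simp only [Finset.mem_union, Finset.mem_filter, Finset.mem_univ, true_and]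
      cases f x <;> simp
    · rw [Finset.disjoint_left]
      intro x hx hx'
      simp only [Finset.mem_filter] at hx hx'
      cases hfx : f x
      · exact hx'.2.2 hfx
      · exact hx.2.2 hfx
  obtain ⟨σ, hσ⟩ : ∃ σ : Bool, 2 ^ (n - Nat.size S.card - 1) ≤
      (Finset.univ.filter fun x : Fin n → Bool => (∀ i ∈ I, x i = π i) ∧ f x ≠ σ).card := by
    by_contra hno
    push_neg at hno
    have h1 := hno true
    have h2 := hno false
    have he : (2:ℕ) ^ (n - Nat.size S.card) =
        2 ^ (n - Nat.size S.card - 1) + 2 ^ (n - Nat.size S.card - 1) := by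
      conv_lhs => rw [hm1]
      rw [pow_succ]
      ring
    rw [he] at hAsum
    exact absurd hAsum (Nat.ne_of_lt (Nat.add_lt_add h1 h2))
  have herr : errCount f (fun x => if ∀ i ∈ I, x i = π i then σ else f x) =
      (Finset.univ.filter fun x : Fin n → Bool => (∀ i ∈ I, x i = π i) ∧ f x ≠ σ).card := by
    unfold errCount
    congr 1
    ext x
    simp only [Finset.mem_filter, Finset.mem_univ, true_and]
    by_cases h : ∀ i ∈ I, x i = π i
    · rw [if_pos h]
      constructor
      · intro hne'
        exact ⟨h, fun he => hne' he.symm⟩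
      · rintro ⟨-, hne'⟩ he
        exact hne' he.symm
    · simp [h]
  have hagree : ∀ x ∈ S, (fun x => if ∀ i ∈ I, x i = π i then σ else f x) x = f x := by
    intro x hx
    simp [hdisj x hx]
  have hle := hScert _ (hov I π σ) hagree
  rw [herr, div_le_iff₀ (by positivity)] at hle
  have hσ' : (2:ℝ) ^ (n - Nat.size S.card - 1) ≤
      ((Finset.univ.filter fun x : Fin n → Bool => (∀ i ∈ I, x i = π i) ∧ f x ≠ σ).card : ℝ) := by
    exact_mod_cast hσ
  have hεk : ε * 2 ^ Nat.size S.card < 1 / 2 := by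
    rw [lt_div_iff₀ (by positivity)] at hk2
    nlinarith
  have hpow : (2:ℝ) ^ n = 2 ^ Nat.size S.card * (2 * 2 ^ (n - Nat.size S.card - 1)) := by
    rw [← pow_succ', ← pow_add]
    congr 1
    exact hm2.symm
  have hfin : ε * 2 ^ n < 2 ^ (n - Nat.size S.card - 1) := by
    rw [hpow]
    have h2m : (0:ℝ) < 2 ^ (n - Nat.size S.card - 1) := by positivity
    nlinarith
  linarith
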